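/- Combining the CRT reconstruction: let p_1,...,p_N ≥ 2 be pairwise coprime with product P, q_i the inverse of P/p_i mod p_i, A' ∈ ℤ^{m×k}, B' ∈ ℤ^{k×n} with 2·Σ_h |a'_{ih}||b'_{hj}| < P for all i,j. Define C' := Σ_{i=1}^N (P/p_i)·q_i·(rmod(A',p_i)·rmod(B',p_i)) (entrywise rmod, integer matrix products) and C'' := rmod(C', P) entrywise. Then C'' = A'·B'. -/

import Mathlib

/-!
The `i`-th summand of `C'` is `≡ A'B'` modulo `p i` (rounding does not change residues and
`(P / p i) q i ≡ 1`), and vanishes modulo every other `p j`, which divides `P / p i`. So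
`C' ≡ A'B'` modulo every `p j`, hence modulo their product `P` by coprimality. Finally
`|rmod C' P| ≤ P/2` and `|A'B'| < P/2` by the bound on `|A'||B'|`, so the two differ by less
than `P` and, agreeing modulo `P`, are equal.
-/

/-- symmetric (round-to-nearest) remainder -/
def rmod (x : ℤ) (p : ℤ) : ℤ := x - p * round ((x : ℚ) / p)

theorem rmod_modEq (x p : ℤ) : rmod x p ≡ x [ZMOD p] :=
  Int.modEq_iff_dvd.mpr ⟨round ((x : ℚ) / p), by simp [rmod]⟩

theorem two_mul_abs_rmod_le (x : ℤ) {p : ℤ} (hp : p ≠ 0) : 2 * |rmod x p| ≤ |p| := by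
  have hrmod : ((rmod x p : ℤ) : ℚ) = p * ((x : ℚ) / p - round ((x : ℚ) / p)) := by
    push_cast [rmod]
    field_simp
  have hround := abs_sub_round ((x : ℚ) / p)
  have : 2 * |((rmod x p : ℤ) : ℚ)| ≤ |(p : ℚ)| := by
    rw [hrmod, abs_mul]
    nlinarith [abs_nonneg (p : ℚ)]
  exact_mod_cast this

theorem eq_of_modEq_of_two_mul_abs_lt {a b P : ℤ} (h : a ≡ b [ZMOD P])
    (ha : 2 * |a| ≤ P) (hb : 2 * |b| < P) : a = b := by
  have hdiff : |b - a| < P := by linarith [abs_sub b a]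
  linarith [Int.eq_zero_of_abs_lt_dvd h.dvd hdiff]

theorem modEq_prod_of_pairwise_coprime {ι : Type*} [Fintype ι] {p : ι → ℤ}
    (hco : Pairwise fun i j => IsCoprime (p i) (p j)) {a b : ℤ} (h : ∀ i, a ≡ b [ZMOD p i]) :
    a ≡ b [ZMOD ∏ i, p i] :=
  Int.modEq_iff_dvd.2 (Fintype.prod_dvd_of_coprime hco fun i => (h i).dvd)

theorem dvd_prod_div_of_ne {ι : Type*} [Fintype ι] (p : ι → ℤ) {i j : ι} (hji : j ≠ i) :
    p j ∣ (∏ l, p l) / p i := by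
  classical
  by_cases hi : p i = 0
  · simp [Finset.prod_eq_zero (Finset.mem_univ i) hi, hi]
  · rw [← Finset.mul_prod_erase _ _ (Finset.mem_univ i), Int.mul_ediv_cancel_left _ hi]
    exact Finset.dvd_prod_of_mem _ (Finset.mem_erase.2 ⟨hji, Finset.mem_univ j⟩)

theorem sum_prod_div_mul_modEq {ι : Type*} [Fintype ι] (p q x : ι → ℤ) {y : ℤ} {j : ι}
    (hq : (∏ l, p l) / p j * q j ≡ 1 [ZMOD p j]) (hx : x j ≡ y [ZMOD p j]) :
    ∑ i, (∏ l, p l) / p i * q i * x i ≡ y [ZMOD p j] := by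
  have hothers : ∀ i ∈ Finset.univ, i ≠ j → (∏ l, p l) / p i * q i * x i ≡ 0 [ZMOD p j] :=
    fun i _ hij => Int.modEq_zero_iff_dvd.2
      (((dvd_prod_div_of_ne p hij.symm).mul_right _).mul_right _)
  refine (Int.sum_modEq_single (fun hj => absurd (Finset.mem_univ j) hj) hothers).trans ?_
  simpa using hq.mul hx

theorem Matrix.mul_apply_modEq {l m n : Type*} [Fintype m] {A A₂ : Matrix l m ℤ}
    {B B₂ : Matrix m n ℤ} {p : ℤ} (hA : ∀ i h, A i h ≡ A₂ i h [ZMOD p])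
    (hB : ∀ h k, B h k ≡ B₂ h k [ZMOD p]) (i : l) (k : n) :
    (A * B) i k ≡ (A₂ * B₂) i k [ZMOD p] := by
  simp only [Matrix.mul_apply]
  exact Int.ModEq.sum fun h _ => (hA i h).mul (hB h k)

theorem Matrix.abs_mul_apply_le {l m n R : Type*} [Fintype m] [CommRing R] [LinearOrder R]
    [IsStrictOrderedRing R] (A : Matrix l m R) (B : Matrix m n R) (i : l) (k : n) :
    |(A * B) i k| ≤ ∑ h, |A i h| * |B h k| := by
  simpa only [Matrix.mul_apply, abs_mul] using
    Finset.abs_sum_le_sum_abs (fun h => A i h * B h k) Finset.univ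

theorem ozaki_scheme_II_correct_general {m k n N : ℕ}
    (p q : Fin N → ℤ)
    (hco : ∀ i j, i ≠ j → IsCoprime (p i) (p j))
    (P : ℤ) (hP : P = ∏ i, p i)
    (hq : ∀ i, (P / p i) * q i ≡ 1 [ZMOD p i])
    (A' : Matrix (Fin m) (Fin k) ℤ) (B' : Matrix (Fin k) (Fin n) ℤ)
    (hbound : ∀ i j, 2 * ∑ h, |A' i h| * |B' h j| < P)
    (C' : Matrix (Fin m) (Fin n) ℤ)
    (hC' : C' = ∑ i, ((P / p i) * q i) •
      ((Matrix.of fun a b => rmod (A' a b) (p i)) *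
       (Matrix.of fun a b => rmod (B' a b) (p i))))
    (C'' : Matrix (Fin m) (Fin n) ℤ)
    (hC'' : C'' = Matrix.of fun a b => rmod (C' a b) P) :
    C'' = A' * B' := by
  subst hP
  ext a b
  have hbound_ab := hbound a b
  have hPpos : 0 < ∏ i, p i :=
    (mul_nonneg zero_le_two (Finset.sum_nonneg fun h _ => by positivity)).trans_lt hbound_ab
  have hC'_modEq : ∀ j, C' a b ≡ (A' * B') a b [ZMOD p j] := fun j => by
    rw [hC', Matrix.sum_apply]
    simp only [Matrix.smul_apply, smul_eq_mul]
    exact sum_prod_div_mul_modEq p q _ (hq j)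
      (Matrix.mul_apply_modEq (fun _ _ => rmod_modEq _ _) (fun _ _ => rmod_modEq _ _) a b)
  rw [hC'', Matrix.of_apply]
  refine eq_of_modEq_of_two_mul_abs_lt ((rmod_modEq _ _).trans
    (modEq_prod_of_pairwise_coprime (fun i j => hco i j) hC'_modEq)) ?_ ?_
  · simpa [abs_of_pos hPpos] using two_mul_abs_rmod_le (C' a b) hPpos.ne'
  · exact (mul_le_mul_of_nonneg_left (Matrix.abs_mul_apply_le A' B' a b) zero_le_two).trans_lt
      hbound_ab

theorem ozaki_scheme_II_correct {m k n N : ℕ}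
    (p q : Fin N → ℤ)
    (hp : ∀ i, 2 ≤ p i)
    (hco : ∀ i j, i ≠ j → IsCoprime (p i) (p j))
    (P : ℤ) (hP : P = ∏ i, p i)
    (hq : ∀ i, (P / p i) * q i ≡ 1 [ZMOD p i])
    (A' : Matrix (Fin m) (Fin k) ℤ) (B' : Matrix (Fin k) (Fin n) ℤ)
    (hbound : ∀ i j, 2 * ∑ h, |A' i h| * |B' h j| < P)
    (C' : Matrix (Fin m) (Fin n) ℤ)
    (hC' : C' = ∑ i, ((P / p i) * q i) •
      ((Matrix.of fun a b => rmod (A' a b) (p i)) *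
       (Matrix.of fun a b => rmod (B' a b) (p i))))
    (C'' : Matrix (Fin m) (Fin n) ℤ)
    (hC'' : C'' = Matrix.of fun a b => rmod (C' a b) P) :
    C'' = A' * B' :=
  ozaki_scheme_II_correct_general p q hco P hP hq A' B' hbound C' hC' C'' hC''
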